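/- Let A = (a_{ij}) be a symmetric real k × k matrix, let t_i(x) = Σ_{j=1}^k a_{ij} x_j and t(x) = Σ_{i=1}^k x_i t_i(x), and let the review rates be λ_i(x) = γ − δ t_i(x) with real constants γ, δ. Suppose the switching probabilities are p_{ij}(x) = x_j for all i, j (each reviewing agent adopts the state of a uniformly random agent). Then for every x in the hyperplane Σ_{j=1}^k x_j = 1 and every i, the SPP vector field satisfies Σ_{j=1}^k x_j x_i λ_j(x) − λ_i(x) x_i = δ (t_i(x) − t(x)) x_i. That is, the dynamics of the Linear Viral Protocol are exactly the replicator dynamics ẋ_i = δ(t_i(x) − t(x)) x_i. -/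
import Mathlib

/-!
STATEMENT 4: With immunities `t_i(x) = Σ_j a_{ij} x_j`, average immunity
`t(x) = Σ_i x_i t_i(x)`, review rates `λ_i(x) = γ − δ t_i(x)` and uniform random
pairing switching probabilities `p_{ij}(x) = x_j`, the SPP vector field on the
hyperplane `Σ_j x_j = 1` satisfies
`Σ_j x_j x_i λ_j(x) − λ_i(x) x_i = δ (t_i(x) − t(x)) x_i`:
the Linear Viral Protocol dynamics are exactly the replicator dynamics.
-/

open Finset

/-- Immunity of state `i` in configuration `x`: `t_i(x) = Σ_j a_{ij} x_j`. -/
def immunity {k : ℕ} (A : Matrix (Fin k) (Fin k) ℝ) (x : Fin k → ℝ) (i : Fin k) : ℝ :=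
  ∑ j, A i j * x j

/-- Average immunity of the population: `t(x) = Σ_i x_i t_i(x)`. -/
def avgImmunity {k : ℕ} (A : Matrix (Fin k) (Fin k) ℝ) (x : Fin k → ℝ) : ℝ :=
  ∑ i, x i * immunity A x i

theorem lvp_is_replicator_dynamics {k : ℕ}
    (A : Matrix (Fin k) (Fin k) ℝ) (hA : ∀ i j, A i j = A j i)
    (γ δ : ℝ)
    (x : Fin k → ℝ) (hx : ∑ j, x j = 1) (i : Fin k) :
    (∑ j, x j * x i * (γ - δ * immunity A x j)) - (γ - δ * immunity A x i) * x i
      = δ * (immunity A x i - avgImmunity A x) * x i := by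
  have h1 : (∑ j, x j * x i * (γ - δ * immunity A x j))
      = x i * (γ * ∑ j, x j) - δ * x i * avgImmunity A x := by
    simp only [avgImmunity]
    rw [Finset.mul_sum, Finset.mul_sum, Finset.mul_sum, ← Finset.sum_sub_distrib]
    apply Finset.sum_congr rfl
    intro j _
    ring
  rw [h1, hx]
  ring
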